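/- Transitivity of reachability: for density operators ρ, σ in a quantum Markov chain (H, E), if supp(ρ) ⊆ R(σ) then R(ρ) ⊆ R(σ). -/

import Mathlib

open Matrix Filter Topology
open scoped ComplexOrder

/-- The matrix of the orthogonal projection onto a subspace `X`. -/
noncomputable def projMat {d : ℕ} (X : Submodule ℂ (EuclideanSpace ℂ (Fin d))) :
    Matrix (Fin d) (Fin d) ℂ :=
  Matrix.toEuclideanLin.symm ((X.subtypeL.comp X.orthogonalProjectionOnto).toLinearMap)

/-- The support of an operator: the range of the associated linear map. -/
noncomputable def matSupp {d : ℕ} (A : Matrix (Fin d) (Fin d) ℂ) :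
    Submodule ℂ (EuclideanSpace ℂ (Fin d)) :=
  LinearMap.range (Matrix.toEuclideanLin A)

/-- The outer product `|v⟩⟨v|`. -/
noncomputable def outer {d : ℕ} (v : EuclideanSpace ℂ (Fin d)) : Matrix (Fin d) (Fin d) ℂ :=
  fun i j => v i * star (v j)

/-- The completely positive map `A ↦ ∑ i, E i * A * (E i)†` given by Kraus operators `E`. -/
noncomputable def krausMap {d m : ℕ} (E : Fin m → Matrix (Fin d) (Fin d) ℂ)
    (A : Matrix (Fin d) (Fin d) ℂ) : Matrix (Fin d) (Fin d) ℂ :=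
  ∑ i, E i * A * (E i)ᴴ

/-- The reachable space of a state `ρ`: the join of the supports of all iterates. -/
noncomputable def Reach {d m : ℕ} (E : Fin m → Matrix (Fin d) (Fin d) ℂ)
    (ρ : Matrix (Fin d) (Fin d) ℂ) : Submodule ℂ (EuclideanSpace ℂ (Fin d)) :=
  ⨆ n : ℕ, matSupp ((krausMap E)^[n] ρ)

/-! The reachable space `Reach E σ` of a positive `σ` is invariant under every Kraus operator
`E i`: it maps `supp Φⁿσ` into `supp Φⁿ⁺¹σ`, where `Φ = krausMap E`, and taking images commutes
with joins. On the other hand `supp Φ(A) ⊆ ⨆ i, E i (supp A)` for every `A`, so each `supp Φⁿρ`, hence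
`Reach E ρ`, lies in any subspace that contains `supp ρ` and is invariant under all `E i`. -/

section Support

variable {d : ℕ}

lemma matSupp_eq_orthogonal_ker {A : Matrix (Fin d) (Fin d) ℂ} (hA : A.IsHermitian) :
    matSupp A = (LinearMap.ker (toEuclideanLin A))ᗮ := by
  rw [LinearMap.orthogonal_ker, ← toEuclideanLin_conjTranspose_eq_adjoint, hA.eq]
  rfl

lemma matSupp_mono {A B : Matrix (Fin d) (Fin d) ℂ} (hA : A.PosSemidef)
    (hAB : (B - A).PosSemidef) : matSupp A ≤ matSupp B := by
  have hB : B.PosSemidef := by simpa using hA.add hAB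
  rw [matSupp_eq_orthogonal_ker hA.1, matSupp_eq_orthogonal_ker hB.1]
  refine Submodule.orthogonal_le fun x hx => ?_
  -- `x†Bx = x†Ax + x†(B - A)x` with both terms nonnegative, so `Bx = 0` forces `x†Ax = 0`.
  simp only [LinearMap.mem_ker, toLpLin_apply, WithLp.toLp_eq_zero] at hx ⊢
  have hsum : star x.ofLp ⬝ᵥ A *ᵥ x.ofLp + star x.ofLp ⬝ᵥ (B - A) *ᵥ x.ofLp = 0 := by
    rw [← dotProduct_add, ← add_mulVec, add_sub_cancel, hx, dotProduct_zero]
  have hA0 := (add_eq_zero_iff_of_nonneg (hA.dotProduct_mulVec_nonneg _)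
    (hAB.dotProduct_mulVec_nonneg _)).mp hsum |>.1
  exact (hA.dotProduct_mulVec_zero_iff _).mp hA0

lemma matSupp_le_matSupp_sum {ι : Type*} {s : Finset ι} {f : ι → Matrix (Fin d) (Fin d) ℂ}
    (hf : ∀ i ∈ s, (f i).PosSemidef) {j : ι} (hj : j ∈ s) :
    matSupp (f j) ≤ matSupp (∑ i ∈ s, f i) := by
  classical
  refine matSupp_mono (hf j hj) ?_
  rw [← Finset.add_sum_erase s f hj, add_sub_cancel_left]
  exact posSemidef_sum _ fun i hi => hf i (Finset.mem_of_mem_erase hi)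

lemma matSupp_sum_le {ι : Type*} [Fintype ι] (f : ι → Matrix (Fin d) (Fin d) ℂ) :
    matSupp (∑ i, f i) ≤ ⨆ i, matSupp (f i) := by
  rintro _ ⟨x, rfl⟩
  rw [map_sum, LinearMap.sum_apply]
  exact Submodule.sum_mem _ fun i _ => Submodule.mem_iSup_of_mem i ⟨x, rfl⟩

lemma matSupp_mul_conjTranspose (M : Matrix (Fin d) (Fin d) ℂ) :
    matSupp (M * Mᴴ) = matSupp M := by
  rw [matSupp, toLpLin_mul_same, toEuclideanLin_conjTranspose_eq_adjoint,
    LinearMap.range_self_comp_adjoint, matSupp]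

lemma matSupp_mul_mul_conjTranspose_le (F A : Matrix (Fin d) (Fin d) ℂ) :
    matSupp (F * A * Fᴴ) ≤ (matSupp A).map (toEuclideanLin F) := by
  rw [matSupp, matSupp, toLpLin_mul_same, toLpLin_mul_same, ← LinearMap.range_comp]
  exact LinearMap.range_comp_le_range _ _

lemma matSupp_mul_mul_conjTranspose {A : Matrix (Fin d) (Fin d) ℂ} (hA : A.PosSemidef)
    (F : Matrix (Fin d) (Fin d) ℂ) :
    matSupp (F * A * Fᴴ) = (matSupp A).map (toEuclideanLin F) := by
  obtain ⟨B, rfl⟩ : ∃ B : Matrix (Fin d) (Fin d) ℂ, A = Bᴴ * B := by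
    open scoped MatrixOrder in exact CStarAlgebra.nonneg_iff_eq_star_mul_self.mp hA.nonneg
  have hconj : F * (Bᴴ * B) * Fᴴ = (F * Bᴴ) * (F * Bᴴ)ᴴ := by
    simp only [conjTranspose_mul, conjTranspose_conjTranspose, Matrix.mul_assoc]
  have hsuppA : matSupp (Bᴴ * B) = matSupp Bᴴ := by
    simpa using matSupp_mul_conjTranspose Bᴴ
  rw [hconj, matSupp_mul_conjTranspose, hsuppA, matSupp, matSupp, toLpLin_mul_same,
    LinearMap.range_comp]

end Support

section Kraus

variable {d m : ℕ} (E : Fin m → Matrix (Fin d) (Fin d) ℂ)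

lemma krausMap_posSemidef {A : Matrix (Fin d) (Fin d) ℂ} (hA : A.PosSemidef) :
    (krausMap E A).PosSemidef :=
  posSemidef_sum _ fun i _ => hA.mul_mul_conjTranspose_same (E i)

lemma krausMap_iterate_posSemidef {A : Matrix (Fin d) (Fin d) ℂ} (hA : A.PosSemidef) (n : ℕ) :
    ((krausMap E)^[n] A).PosSemidef := by
  induction n with
  | zero => exact hA
  | succ n ih => rw [Function.iterate_succ_apply']; exact krausMap_posSemidef E ih

lemma matSupp_krausMap_le (A : Matrix (Fin d) (Fin d) ℂ) :
    matSupp (krausMap E A) ≤ ⨆ i, (matSupp A).map (toEuclideanLin (E i)) :=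
  (matSupp_sum_le _).trans (iSup_mono fun i => matSupp_mul_mul_conjTranspose_le (E i) A)

lemma map_matSupp_le_matSupp_krausMap {A : Matrix (Fin d) (Fin d) ℂ} (hA : A.PosSemidef)
    (i : Fin m) : (matSupp A).map (toEuclideanLin (E i)) ≤ matSupp (krausMap E A) := by
  rw [← matSupp_mul_mul_conjTranspose hA]
  exact matSupp_le_matSupp_sum (fun j _ => hA.mul_mul_conjTranspose_same (E j))
    (Finset.mem_univ i)

lemma map_reach_le {σ : Matrix (Fin d) (Fin d) ℂ} (hσ : σ.PosSemidef) (i : Fin m) :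
    (Reach E σ).map (toEuclideanLin (E i)) ≤ Reach E σ := by
  rw [Reach, Submodule.map_iSup]
  refine iSup_le fun n => ?_
  calc (matSupp ((krausMap E)^[n] σ)).map (toEuclideanLin (E i))
      ≤ matSupp ((krausMap E)^[n + 1] σ) := by
        rw [Function.iterate_succ_apply']
        exact map_matSupp_le_matSupp_krausMap E (krausMap_iterate_posSemidef E hσ n) i
    _ ≤ ⨆ n, matSupp ((krausMap E)^[n] σ) := le_iSup (fun n => matSupp ((krausMap E)^[n] σ)) _

lemma reach_le_of_map_le {ρ : Matrix (Fin d) (Fin d) ℂ}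
    {V : Submodule ℂ (EuclideanSpace ℂ (Fin d))} (hV : ∀ i, V.map (toEuclideanLin (E i)) ≤ V)
    (hρ : matSupp ρ ≤ V) : Reach E ρ ≤ V := by
  refine iSup_le fun n => ?_
  induction n with
  | zero => exact hρ
  | succ n ih =>
    rw [Function.iterate_succ_apply']
    exact (matSupp_krausMap_le E _).trans (iSup_le fun i => (Submodule.map_mono ih).trans (hV i))

end Kraus

theorem stmt13_general {d m : ℕ} (E : Fin m → Matrix (Fin d) (Fin d) ℂ)
    (ρ σ : Matrix (Fin d) (Fin d) ℂ)
    (hσ : σ.PosSemidef)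
    (h : matSupp ρ ≤ Reach E σ) :
    Reach E ρ ≤ Reach E σ :=
  reach_le_of_map_le E (map_reach_le E hσ) h

/-- Transitivity of reachability. -/
theorem stmt13 {d m : ℕ} (E : Fin m → Matrix (Fin d) (Fin d) ℂ)
    (hE : ∑ i, (E i)ᴴ * E i = 1)
    (ρ σ : Matrix (Fin d) (Fin d) ℂ) (hρ : ρ.PosSemidef) (hρtr : ρ.trace = 1)
    (hσ : σ.PosSemidef) (hσtr : σ.trace = 1)
    (h : matSupp ρ ≤ Reach E σ) :
    Reach E ρ ≤ Reach E σ :=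
  stmt13_general E ρ σ hσ h
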